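/- A word w in S_α is 221-avoiding if and only if for each letter b with 2 ≤ b ≤ m, all letters occurring to the right of the second occurrence of b in w are greater than or equal to b. Equivalently, w is 221-avoiding if and only if the multiset B = {2^{α_2 − 1}, 3^{α_3 − 1}, …, m^{α_m − 1}} is a submultiset of Rlwmin(w). -/
import Mathlib


/-- The multiset of weak right-to-left minima of a word `w : Fin n → Fin m`
(letter values `(w t) + 1 ∈ {1,…,m}`). -/
def rlwmin {m n : ℕ} (w : Fin n → Fin m) : Multiset ℕ :=
  ((Finset.univ.filter (fun t : Fin n => ∀ j, t < j → w t ≤ w j)).val).map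
    (fun t => (w t : ℕ) + 1)

/-- for a word `w` of content `α` over `{1,…,m}`, the following are
equivalent characterizations of 221-avoidance:
(1) for each `2 ≤ b ≤ m`, every letter to the right of the second occurrence of `b`
is `≥ b` (phrased: after any two occurrences of `b`, all letters are `≥ b`);
(2) the multiset `B = {2^{α 2 − 1}, …, m^{α m − 1}}` is a submultiset of `Rlwmin(w)`. -/
theorem avoid221_iff (m n : ℕ) (α : ℕ → ℕ) (w : Fin n → Fin m)
    (hcontent : ∀ j ∈ Finset.Icc 1 m,
      (Finset.univ.filter (fun i => (w i : ℕ) + 1 = j)).card = α j) :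
    ((¬ ∃ i j k : Fin n, i < j ∧ j < k ∧ w i = w j ∧ w k < w j) ↔
      (∀ b, 2 ≤ b → b ≤ m → ∀ i j k : Fin n, i < j → j < k →
        (w i : ℕ) + 1 = b → (w j : ℕ) + 1 = b → b ≤ (w k : ℕ) + 1)) ∧
    ((¬ ∃ i j k : Fin n, i < j ∧ j < k ∧ w i = w j ∧ w k < w j) ↔
      (∑ b ∈ Finset.Icc 2 m, Multiset.replicate (α b - 1) b) ≤ rlwmin w) := by
  classical
  have hcount : ∀ b, Multiset.count b (rlwmin w) =
      (Finset.univ.filter (fun t : Fin n =>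
        ((w t : ℕ) + 1 = b) ∧ ∀ j, t < j → w t ≤ w j)).card := by
    intro b
    unfold rlwmin
    rw [Multiset.count_map]
    rw [← Finset.filter_val, Finset.filter_filter]
    rw [← Finset.card_def]
    congr 1
    apply Finset.filter_congr
    intro t _
    simp [eq_comm, and_comm]
  have hB : ∀ b, Multiset.count b
      (∑ b' ∈ Finset.Icc 2 m, Multiset.replicate (α b' - 1) b') =
      if b ∈ Finset.Icc 2 m then α b - 1 else 0 := by
    intro b
    rw [Multiset.count_sum']
    simp only [Multiset.count_replicate]
    rw [Finset.sum_ite_eq' (Finset.Icc 2 m) b (fun b' => α b' - 1)]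
  constructor
  · constructor
    · intro hav b _ _ i j k hij hjk hwi hwj
      by_contra h
      push_neg at h
      exact hav ⟨i, j, k, hij, hjk, Fin.ext (by omega), by
        rw [Fin.lt_def]; omega⟩
    · rintro h ⟨i, j, k, hij, hjk, hwij, hkj⟩
      have hkj' : (w k : ℕ) < (w j : ℕ) := hkj
      have hwij' : (w i : ℕ) = (w j : ℕ) := congrArg _ hwij
      have hb2 : 2 ≤ (w j : ℕ) + 1 := by omega
      have hbm : (w j : ℕ) + 1 ≤ m := (w j).isLt
      have := h ((w j : ℕ) + 1) hb2 hbm i j k hij hjk (by omega) rfl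
      omega
  · constructor
    · intro hav
      rw [Multiset.le_iff_count]
      intro b
      rw [hB, hcount]
      split_ifs with hb
      · simp only [Finset.mem_Icc] at hb
        have hA : (Finset.univ.filter (fun t : Fin n => (w t : ℕ) + 1 = b)).card = α b :=
          hcontent b (Finset.mem_Icc.mpr ⟨by omega, hb.2⟩)
        have hle1 : (Finset.univ.filter (fun t : Fin n =>
            ((w t : ℕ) + 1 = b) ∧ ¬ ∀ j, t < j → w t ≤ w j)).card ≤ 1 := by
          rw [Finset.card_le_one]
          intro t₁ ht₁ t₂ ht₂
          simp only [Finset.mem_filter] at ht₁ ht₂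
          by_contra hne
          rcases lt_trichotomy t₁ t₂ with hlt | heq | hlt
          · obtain ⟨-, hv₂, hnt⟩ := ht₂
            obtain ⟨-, hv₁, -⟩ := ht₁
            push_neg at hnt
            obtain ⟨k, hk, hwk⟩ := hnt
            exact hav ⟨t₁, t₂, k, hlt, hk, Fin.ext (by omega), hwk⟩
          · exact hne heq
          · obtain ⟨-, hv₁, hnt⟩ := ht₁
            obtain ⟨-, hv₂, -⟩ := ht₂
            push_neg at hnt
            obtain ⟨k, hk, hwk⟩ := hnt
            exact hav ⟨t₂, t₁, k, hlt, hk, Fin.ext (by omega), hwk⟩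
        have hsplit : (Finset.univ.filter (fun t : Fin n =>
              ((w t : ℕ) + 1 = b) ∧ ∀ j, t < j → w t ≤ w j)).card
            + (Finset.univ.filter (fun t : Fin n =>
              ((w t : ℕ) + 1 = b) ∧ ¬ ∀ j, t < j → w t ≤ w j)).card
            = (Finset.univ.filter (fun t : Fin n => (w t : ℕ) + 1 = b)).card := by
          rw [← Finset.filter_filter, ← Finset.filter_filter,
            Finset.card_filter_add_card_filter_not]
        omega
      · exact Nat.zero_le _
    · rintro hle ⟨i, j, k, hij, hjk, hwij, hkj⟩
      have hkj' : (w k : ℕ) < (w j : ℕ) := hkj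
      have hwij' : (w i : ℕ) = (w j : ℕ) := congrArg _ hwij
      set b := (w j : ℕ) + 1 with hb
      have hbmem : b ∈ Finset.Icc 2 m := Finset.mem_Icc.mpr ⟨by omega, (w j).isLt⟩
      have hcnt := Multiset.le_iff_count.mp hle b
      rw [hB, hcount, if_pos hbmem] at hcnt
      have hij' : i ≠ j := Fin.ne_of_lt hij
      have hsub : (Finset.univ.filter (fun t : Fin n =>
          ((w t : ℕ) + 1 = b) ∧ ∀ j, t < j → w t ≤ w j)) ⊆
          (Finset.univ.filter (fun t : Fin n => (w t : ℕ) + 1 = b)) \ {i, j} := by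
        intro t ht
        simp only [Finset.mem_filter] at ht
        simp only [Finset.mem_sdiff, Finset.mem_filter, Finset.mem_insert,
          Finset.mem_singleton]
        refine ⟨⟨Finset.mem_univ _, ht.2.1⟩, ?_⟩
        rintro (rfl | rfl)
        · exact absurd (ht.2.2 k (hij.trans hjk)) (by
            rw [Fin.le_def]; omega)
        · exact absurd (ht.2.2 k hjk) (by rw [Fin.le_def]; omega)
      have hijsub : ({i, j} : Finset (Fin n)) ⊆
          Finset.univ.filter (fun t : Fin n => (w t : ℕ) + 1 = b) := by
        intro t ht
        simp only [Finset.mem_insert, Finset.mem_singleton] at ht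
        rcases ht with rfl | rfl <;> simp [hb, hwij']
      have hA : (Finset.univ.filter (fun t : Fin n => (w t : ℕ) + 1 = b)).card = α b :=
        hcontent b (Finset.mem_Icc.mpr ⟨by omega, (w j).isLt⟩)
      have hcard2 : ({i, j} : Finset (Fin n)).card = 2 := by
        rw [Finset.card_insert_of_notMem (by simpa using hij'), Finset.card_singleton]
      have h1 := Finset.card_le_card hsub
      rw [Finset.card_sdiff_of_subset hijsub, hcard2, hA] at h1
      have h2 := Finset.card_le_card hijsub
      rw [hcard2, hA] at h2
      omega
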